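/- arXiv:1609.01684 — 2 statements merged into one kernel-verified Lean document; each statement's English description precedes it below -/
import Mathlib

section
/- There is no resonance sextuple (j1,...,j6) of integers with exactly five entries in S={-2,-1,1,2} and one entry outside S; i.e., for any j1,...,j5 ∈ S there is no k ∈ ℤ\S such that j1+j2+j3=j4+j5+k and j1²+j2²+j3²=j4²+j5²+k². -/
/-! Squares of elements of `S` are `1` or `4`, so `k² = (j₁² + j₂² + j₃²) - (j₄² + j₅²)`
is at most `12 - 2 = 10`, and modulo `3` it is `3 - 2 = 1`.
Hence `|k| ≤ 3` and `3 ∤ k`, which leaves exactly `k ∈ S`. -/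

lemma sq_eq_one_or_four_of_mem {j : ℤ} (hj : j ∈ ({-2, -1, 1, 2} : Set ℤ)) :
    j ^ 2 = 1 ∨ j ^ 2 = 4 := by
  rcases hj with rfl | rfl | rfl | rfl <;> decide

lemma mem_of_sq_le_ten_of_not_three_dvd {k : ℤ} (hk : k ^ 2 ≤ 10) (h3 : ¬ 3 ∣ k) :
    k ∈ ({-2, -1, 1, 2} : Set ℤ) := by
  have hlo : -3 ≤ k := by nlinarith
  have hhi : k ≤ 3 := by nlinarith
  simp only [Set.mem_insert_iff, Set.mem_singleton_iff]
  omega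

/-- Completeness of `S = {-2,-1,1,2}`: there is no resonance with five entries in `S`
and one entry outside `S`. -/
theorem no_resonance_five_in_S (j1 j2 j3 j4 j5 : ℤ)
    (h1 : j1 ∈ ({-2, -1, 1, 2} : Set ℤ)) (h2 : j2 ∈ ({-2, -1, 1, 2} : Set ℤ))
    (h3 : j3 ∈ ({-2, -1, 1, 2} : Set ℤ)) (h4 : j4 ∈ ({-2, -1, 1, 2} : Set ℤ))
    (h5 : j5 ∈ ({-2, -1, 1, 2} : Set ℤ)) :
    ¬ ∃ k : ℤ, k ∉ ({-2, -1, 1, 2} : Set ℤ) ∧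
      j1 + j2 + j3 = j4 + j5 + k ∧
      j1 ^ 2 + j2 ^ 2 + j3 ^ 2 = j4 ^ 2 + j5 ^ 2 + k ^ 2 := by
  rintro ⟨k, hk, -, hsq⟩
  have hs1 := sq_eq_one_or_four_of_mem h1
  have hs2 := sq_eq_one_or_four_of_mem h2
  have hs3 := sq_eq_one_or_four_of_mem h3
  have hs4 := sq_eq_one_or_four_of_mem h4
  have hs5 := sq_eq_one_or_four_of_mem h5
  have hk_sq_le : k ^ 2 ≤ 10 := by omega
  have hk_not_dvd : ¬ 3 ∣ k := fun h ↦ by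
    have : 3 ∣ k ^ 2 := dvd_pow h two_ne_zero
    omega
  exact hk (mem_of_sq_le_ten_of_not_three_dvd hk_sq_le hk_not_dvd)
end

section
/- Let A: ℝ → M_n(ℂ) be continuous and T-periodic, and let X(t) be the fundamental matrix solution of ẋ = A(t)x with X(0) = I. If B is any complex matrix with e^{TB} = X(T), then P(t) := X(t) e^{-tB} is T-periodic and invertible, and the change of variables x = P(t)v conjugates ẋ = A(t)x to the constant-coefficient system v̇ = Bv. -/
/-!
Everything rests on uniqueness for the linear system `ẋ = A(t) x`: on a compact time interval
the continuous coefficients are bounded, so the vector field is uniformly Lipschitz there.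
Uniqueness makes `X t` injective (hence invertible), shows that every solution is
`t ↦ X t *ᵥ x 0`, and, since `t ↦ X (t + T)` again solves the periodic system, gives
`X (t + T) = X t * X T`. With `X T = exp (T • B)` this is the periodicity of `P`, and
`x = P v` forces `v t = exp (t • B) *ᵥ v 0`.
-/

open Matrix

open Set in
theorem ODE_solution_unique_of_continuous_clm {𝕜 E : Type*} [NontriviallyNormedField 𝕜]
    [NormedAddCommGroup E] [NormedSpace ℝ E] [NormedSpace 𝕜 E] {C : ℝ → E →L[𝕜] E}
    (hC : Continuous C) {f g : ℝ → E} (hf : ∀ t, HasDerivAt f (C t (f t)) t)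
    (hg : ∀ t, HasDerivAt g (C t (g t)) t) {t₀ : ℝ} (heq : f t₀ = g t₀) : f = g := by
  funext t
  obtain ⟨a, b, ht, ht₀⟩ : ∃ a b, t ∈ Ioo a b ∧ t₀ ∈ Ioo a b :=
    ⟨min t t₀ - 1, max t t₀ + 1, by grind⟩
  obtain ⟨K, hK⟩ := (isCompact_Icc (a := a) (b := b) |>.image_of_continuousOn
    (continuous_nnnorm.comp hC).continuousOn).bddAbove
  exact ODE_solution_unique_of_mem_Ioo (s := fun _ => univ)
    (fun s hs => ((C s).lipschitz.weaken (hK ⟨s, Ioo_subset_Icc_self hs, rfl⟩)).lipschitzOnWith)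
    ht₀ (fun s _ => ⟨hf s, trivial⟩) (fun s _ => ⟨hg s, trivial⟩) heq ht

theorem Matrix.hasDerivAt_mulVec_of_entries {𝕜 m n : Type*} [RCLike 𝕜] [Fintype n]
    {X : ℝ → Matrix m n 𝕜} {X' : Matrix m n 𝕜} {t : ℝ}
    (h : ∀ i j, HasDerivAt (fun s => X s i j) (X' i j) t) (c : n → 𝕜) :
    HasDerivAt (fun s => X s *ᵥ c) (X' *ᵥ c) t :=
  hasDerivAt_pi.2 fun i => HasDerivAt.fun_sum fun j _ => (h i j).mul_const (c j)

section

variable {𝕜 : Type*} [RCLike 𝕜] {m : Type*} [Fintype m]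

theorem Matrix.ODE_solution_unique_mulVec {A : ℝ → Matrix m m 𝕜} (hA : Continuous A)
    {f g : ℝ → m → 𝕜} (hf : ∀ t, HasDerivAt f (A t *ᵥ f t) t)
    (hg : ∀ t, HasDerivAt g (A t *ᵥ g t) t) {t₀ : ℝ} (heq : f t₀ = g t₀) : f = g :=
  ODE_solution_unique_of_continuous_clm
    (C := fun t => LinearMap.toContinuousLinearMap (A t).mulVecLin)
    (continuous_clm_apply.2 fun _ => hA.matrix_mulVec continuous_const) hf hg heq

variable [DecidableEq m]

theorem Matrix.exp_smul_mul_exp_smul (B : Matrix m m 𝕜) (a b : ℝ) :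
    NormedSpace.exp (a • B) * NormedSpace.exp (b • B) = NormedSpace.exp ((a + b) • B) := by
  rw [add_smul, exp_add_of_commute _ _ (((Commute.refl B).smul_left a).smul_right b)]

open scoped Matrix.Norms.Operator in
theorem Matrix.hasDerivAt_exp_smul_mulVec (B : Matrix m m 𝕜) (c : m → 𝕜) (t : ℝ) :
    HasDerivAt (fun s : ℝ => NormedSpace.exp (s • B) *ᵥ c)
      (B *ᵥ (NormedSpace.exp (t • B) *ᵥ c)) t := by
  let L : Matrix m m 𝕜 →L[ℝ] (m → 𝕜) :=
    LinearMap.toContinuousLinearMap ((mulVecBilin ℝ 𝕜).flip c)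
  rw [mulVec_mulVec]
  exact L.hasFDerivAt.comp_hasDerivAt t (hasDerivAt_exp_smul_const' B t)

/-- Principal fundamental matrix of `ẋ = A(t) x`. -/
structure IsFundamentalMatrix (A X : ℝ → Matrix m m 𝕜) : Prop where
  map_zero : X 0 = 1
  hasDerivAt_mulVec (t : ℝ) (c : m → 𝕜) : HasDerivAt (fun s => X s *ᵥ c) (A t *ᵥ (X t *ᵥ c)) t

namespace IsFundamentalMatrix

variable {A X : ℝ → Matrix m m 𝕜}

theorem eq_mulVec (hX : IsFundamentalMatrix A X) (hA : Continuous A) {x : ℝ → m → 𝕜}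
    (hx : ∀ t, HasDerivAt x (A t *ᵥ x t) t) : x = fun t => X t *ᵥ x 0 :=
  ODE_solution_unique_mulVec hA hx (fun t => hX.hasDerivAt_mulVec t (x 0)) (t₀ := 0)
    (by simp [hX.map_zero])

theorem isUnit (hX : IsFundamentalMatrix A X) (hA : Continuous A) (t : ℝ) : IsUnit (X t) := by
  refine mulVec_injective_iff_isUnit.1 fun u w huw => ?_
  have h := ODE_solution_unique_mulVec hA (hX.hasDerivAt_mulVec · u) (hX.hasDerivAt_mulVec · w) huw
  simpa [hX.map_zero] using congrFun h 0

theorem add_period (hX : IsFundamentalMatrix A X) (hA : Continuous A) {T : ℝ}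
    (hAper : ∀ t, A (t + T) = A t) (t : ℝ) : X (t + T) = X t * X T := by
  refine ext_iff_mulVec.2 fun c => ?_
  have hshift : ∀ s, HasDerivAt (fun r => X (r + T) *ᵥ c) (A s *ᵥ (X (s + T) *ᵥ c)) s :=
    fun s => by simpa [hAper] using (hX.hasDerivAt_mulVec (s + T) c).comp_add_const s T
  simpa [mulVec_mulVec] using congrFun (hX.eq_mulVec hA hshift) t

theorem hasDerivAt_of_eq_mulVec (hX : IsFundamentalMatrix A X) (hA : Continuous A)
    (B : Matrix m m 𝕜) {x v : ℝ → m → 𝕜} (hx : ∀ t, HasDerivAt x (A t *ᵥ x t) t)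
    (hv : ∀ t, x t = (X t * NormedSpace.exp (-(t • B))) *ᵥ v t) (t : ℝ) :
    HasDerivAt v (B *ᵥ v t) t := by
  have hv0 : x 0 = v 0 := by simp [hv 0, hX.map_zero]
  have hv_eq : ∀ s, v s = NormedSpace.exp (s • B) *ᵥ v 0 := fun s => by
    have h : X s *ᵥ (NormedSpace.exp (-(s • B)) *ᵥ v s) = X s *ᵥ v 0 := by
      rw [mulVec_mulVec, ← hv s, ← hv0]
      exact congrFun (hX.eq_mulVec hA hx) s
    rw [← mulVec_injective_iff_isUnit.2 (hX.isUnit hA s) h, mulVec_mulVec, ← neg_smul,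
      exp_smul_mul_exp_smul, add_neg_cancel, zero_smul, NormedSpace.exp_zero, one_mulVec]
  rw [funext hv_eq]
  exact hasDerivAt_exp_smul_mulVec B (v 0) t

end IsFundamentalMatrix

end

theorem floquet_general (n : ℕ) (T : ℝ)
    (A : ℝ → Matrix (Fin n) (Fin n) ℂ)
    (hAcont : ∀ i j, Continuous fun t => A t i j)
    (hAper : ∀ t, A (t + T) = A t)
    (X : ℝ → Matrix (Fin n) (Fin n) ℂ)
    (hX0 : X 0 = 1)
    (hX : ∀ t, ∀ i j, HasDerivAt (fun s => X s i j) ((A t * X t) i j) t)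
    (B : Matrix (Fin n) (Fin n) ℂ)
    (hB : NormedSpace.exp (T • B) = X T)
    (P : ℝ → Matrix (Fin n) (Fin n) ℂ)
    (hP : ∀ t, P t = X t * NormedSpace.exp (-(t • B))) :
    (∀ t, P (t + T) = P t) ∧ (∀ t, IsUnit (P t)) ∧
    (∀ x : ℝ → Fin n → ℂ,
      (∀ t, HasDerivAt x ((A t).mulVec (x t)) t) →
      ∀ v : ℝ → Fin n → ℂ, (∀ t, x t = (P t).mulVec (v t)) →
      ∀ t, HasDerivAt v (B.mulVec (v t)) t) := by
  have hA : Continuous A := continuous_matrix hAcont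
  have hF : IsFundamentalMatrix A X :=
    ⟨hX0, fun t c => by simpa [mulVec_mulVec] using hasDerivAt_mulVec_of_entries (hX t) c⟩
  refine ⟨fun t => ?_, fun t => ?_, fun x hx v hv =>
    hF.hasDerivAt_of_eq_mulVec hA B hx (by simpa only [hP] using hv)⟩
  · rw [hP, hP, hF.add_period hA hAper, ← hB, mul_assoc, ← neg_smul, ← neg_smul,
      exp_smul_mul_exp_smul]
    congr 3
    ring
  · rw [hP]
    exact (hF.isUnit hA t).mul (isUnit_exp _)

/-- Floquet's theorem: if `A` is continuous and `T`-periodic, `X` is the fundamental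
matrix solution of `ẋ = A(t)x` with `X(0) = 1`, and `e^{TB} = X(T)`, then
`P(t) := X(t)e^{-tB}` is `T`-periodic and invertible, and the change of variables
`x = P(t)v` conjugates `ẋ = A(t)x` to the constant-coefficient system `v̇ = Bv`. -/
theorem floquet (n : ℕ) (T : ℝ) (hT : 0 < T)
    (A : ℝ → Matrix (Fin n) (Fin n) ℂ)
    (hAcont : ∀ i j, Continuous fun t => A t i j)
    (hAper : ∀ t, A (t + T) = A t)
    (X : ℝ → Matrix (Fin n) (Fin n) ℂ)
    (hX0 : X 0 = 1)
    (hX : ∀ t, ∀ i j, HasDerivAt (fun s => X s i j) ((A t * X t) i j) t)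
    (B : Matrix (Fin n) (Fin n) ℂ)
    (hB : NormedSpace.exp (T • B) = X T)
    (P : ℝ → Matrix (Fin n) (Fin n) ℂ)
    (hP : ∀ t, P t = X t * NormedSpace.exp (-(t • B))) :
    (∀ t, P (t + T) = P t) ∧ (∀ t, IsUnit (P t)) ∧
    (∀ x : ℝ → Fin n → ℂ,
      (∀ t, HasDerivAt x ((A t).mulVec (x t)) t) →
      ∀ v : ℝ → Fin n → ℂ, (∀ t, x t = (P t).mulVec (v t)) →
      ∀ t, HasDerivAt v (B.mulVec (v t)) t) :=
  floquet_general n T A hAcont hAper X hX0 hX B hB P hP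
end
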